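/- For every r with 1/2 ≤ r ≤ 1, letting μ₁(r) = ∫_{ℝ} z·ν(z, r) dz and σ²(r) = ∫_{ℝ} z²·ν(z, r) dz − μ₁(r)², one has (log 2)² · σ²(r) < 79. In particular, σ²(r) ≤ ∫_{ℝ} z²·ν(z, r) dz < 164. -/

import Mathlib

/-!
For `1/2 ≤ r ≤ 1` the density obeys `ν(z, r) ≤ e^{(1 - |z|)/3}`. For `z ≥ 0` the first factor
`1 - e^{-2^{-z}}` is at most `2^{-z}`. For `z ≤ 0` the first `⌊-z⌋` factors of the product have
`2^{-z-j-1} ≥ 1`, so, as `r ≥ 1/2`, each is at most `1 - (1 - e^{-1})/2 ≤ 7/10 ≤ e^{-1/3}`.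
Hence `∫ z² ν ≤ e^{1/3} ∫ z² e^{-|z|/3} = 108 e^{1/3} < 155`, the variance is at most this
second moment, and `(log 2)² · 155 < 79`.
-/

open MeasureTheory

/-- The density `ν(z, r)` of the highest position of an F-PCSA subsketch. -/
noncomputable def nu (z r : ℝ) : ℝ :=
  (1 - Real.exp (-(2:ℝ) ^ (-z))) * r *
    ∏' j : ℕ, (1 - (1 - Real.exp (-(2:ℝ) ^ (-z - ((j : ℝ) + 1)))) * r)

open Real Set Finset

namespace Real

variable {ι : Type*} {f : ι → ℝ}

theorem hasProd_iInf_of_nonneg_of_le_one (h0 : ∀ i, 0 ≤ f i) (h1 : ∀ i, f i ≤ 1) :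
    HasProd f (⨅ s : Finset ι, ∏ i ∈ s, f i) :=
  tendsto_atTop_ciInf (prod_anti_set_of_le_one h0 h1)
    ⟨0, by rintro _ ⟨s, rfl⟩; exact prod_nonneg fun i _ ↦ h0 i⟩

theorem tprod_le_prod_of_nonneg_of_le_one (h0 : ∀ i, 0 ≤ f i) (h1 : ∀ i, f i ≤ 1)
    (s : Finset ι) : ∏' i, f i ≤ ∏ i ∈ s, f i := by
  rw [(hasProd_iInf_of_nonneg_of_le_one h0 h1).tprod_eq]
  exact ciInf_le ⟨0, by rintro _ ⟨t, rfl⟩; exact prod_nonneg fun i _ ↦ h0 i⟩ s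

theorem tprod_le_one_of_nonneg_of_le_one (h0 : ∀ i, 0 ≤ f i) (h1 : ∀ i, f i ≤ 1) :
    ∏' i, f i ≤ 1 :=
  (tprod_le_prod_of_nonneg_of_le_one h0 h1 ∅).trans_eq prod_empty

theorem exp_one_third_le : exp (1 / 3) ≤ 10 / 7 := by
  have hcube : exp (1 / 3) ^ 3 = exp 1 := by rw [← exp_nat_mul]; norm_num
  refine le_of_pow_le_pow_left₀ three_ne_zero (by norm_num) ?_
  rw [hcube]
  linarith [exp_one_lt_d9]

theorem seven_tenths_le_exp_neg_one_third : 7 / 10 ≤ exp (-(1 / 3)) := by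
  rw [exp_neg, le_inv_comm₀ (by norm_num) (exp_pos _)]
  linarith [exp_one_third_le]

theorem integral_sq_mul_exp_neg_mul_abs {b : ℝ} (hb : 0 < b) :
    ∫ z : ℝ, z ^ 2 * exp (-(b * |z|)) = 4 / b ^ 3 := by
  have hGamma : Gamma 3 = 2 := by
    rw [show (3 : ℝ) = (2 : ℕ) + 1 by norm_num, Gamma_nat_eq_factorial]; norm_num
  have hIoi := integral_rpow_mul_exp_neg_mul_Ioi (a := 3) three_pos hb
  norm_num only [rpow_ofNat] at hIoi
  calc ∫ z : ℝ, z ^ 2 * exp (-(b * |z|))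
      = ∫ z : ℝ, (fun x ↦ x ^ 2 * exp (-(b * x))) |z| := by simp only [sq_abs]
    _ = 2 * ∫ x in Ioi 0, x ^ 2 * exp (-(b * x)) :=
        integral_comp_abs (f := fun x ↦ x ^ 2 * exp (-(b * x)))
    _ = 4 / b ^ 3 := by
      rw [hIoi, hGamma]
      field_simp
      norm_num

end Real

noncomputable def hitProb (z : ℝ) : ℝ := 1 - exp (-(2 : ℝ) ^ (-z))

theorem nu_eq (z r : ℝ) :
    nu z r = hitProb z * r * ∏' j : ℕ, (1 - hitProb (z + (j + 1)) * r) := by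
  simp only [nu, hitProb, neg_add']

theorem hitProb_nonneg (z : ℝ) : 0 ≤ hitProb z := by
  have : exp (-(2 : ℝ) ^ (-z)) ≤ 1 := exp_le_one_iff.mpr (neg_nonpos.mpr (by positivity))
  unfold hitProb; linarith

theorem hitProb_le_one (z : ℝ) : hitProb z ≤ 1 := by
  have := exp_pos (-(2 : ℝ) ^ (-z))
  unfold hitProb; linarith

theorem hitProb_le_rpow (z : ℝ) : hitProb z ≤ (2 : ℝ) ^ (-z) := by
  have := add_one_le_exp (-(2 : ℝ) ^ (-z))
  unfold hitProb; linarith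

theorem three_fifths_le_hitProb {z : ℝ} (hz : z ≤ 0) : 3 / 5 ≤ hitProb z := by
  have hrpow : 1 ≤ (2 : ℝ) ^ (-z) := one_le_rpow one_le_two (neg_nonneg.mpr hz)
  have hexp : exp (-(2 : ℝ) ^ (-z)) ≤ exp (-1) := exp_le_exp.mpr (by linarith)
  have hexp1 : exp (-1) ≤ 2 / 5 := by
    rw [exp_neg, inv_le_comm₀ (exp_pos _) (by norm_num)]
    linarith [exp_one_gt_d9]
  unfold hitProb; linarith

section Density

variable {r : ℝ}

theorem hitProb_mul_nonneg (hr0 : 0 ≤ r) (z : ℝ) : 0 ≤ hitProb z * r :=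
  mul_nonneg (hitProb_nonneg z) hr0

theorem hitProb_mul_le_one (hr0 : 0 ≤ r) (hr1 : r ≤ 1) (z : ℝ) : hitProb z * r ≤ 1 :=
  mul_le_one₀ (hitProb_le_one z) hr0 hr1

theorem one_sub_hitProb_mul_nonneg (hr0 : 0 ≤ r) (hr1 : r ≤ 1) (z : ℝ) :
    0 ≤ 1 - hitProb z * r :=
  sub_nonneg.mpr (hitProb_mul_le_one hr0 hr1 z)

theorem one_sub_hitProb_mul_le_one (hr0 : 0 ≤ r) (z : ℝ) : 1 - hitProb z * r ≤ 1 :=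
  sub_le_self _ (hitProb_mul_nonneg hr0 z)

theorem nu_nonneg (hr0 : 0 ≤ r) (hr1 : r ≤ 1) (z : ℝ) : 0 ≤ nu z r := by
  rw [nu_eq]
  exact mul_nonneg (hitProb_mul_nonneg hr0 z)
    (tprod_nonneg fun j ↦ one_sub_hitProb_mul_nonneg hr0 hr1 _)

theorem nu_le_hitProb (hr0 : 0 ≤ r) (hr1 : r ≤ 1) (z : ℝ) : nu z r ≤ hitProb z := by
  rw [nu_eq]
  calc hitProb z * r * ∏' j : ℕ, (1 - hitProb (z + (j + 1)) * r)
      ≤ hitProb z * r := mul_le_of_le_one_right (hitProb_mul_nonneg hr0 z)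
        (tprod_le_one_of_nonneg_of_le_one (fun j ↦ one_sub_hitProb_mul_nonneg hr0 hr1 _)
          fun j ↦ one_sub_hitProb_mul_le_one hr0 _)
    _ ≤ hitProb z := mul_le_of_le_one_right (hitProb_nonneg z) hr1

theorem nu_le_prod_range (hr0 : 0 ≤ r) (hr1 : r ≤ 1) (z : ℝ) (n : ℕ) :
    nu z r ≤ ∏ j ∈ range n, (1 - hitProb (z + (j + 1)) * r) := by
  rw [nu_eq]
  calc hitProb z * r * ∏' j : ℕ, (1 - hitProb (z + (j + 1)) * r)
      ≤ ∏' j : ℕ, (1 - hitProb (z + (j + 1)) * r) := mul_le_of_le_one_left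
        (tprod_nonneg fun j ↦ one_sub_hitProb_mul_nonneg hr0 hr1 _) (hitProb_mul_le_one hr0 hr1 z)
    _ ≤ _ := tprod_le_prod_of_nonneg_of_le_one (fun j ↦ one_sub_hitProb_mul_nonneg hr0 hr1 _)
        (fun j ↦ one_sub_hitProb_mul_le_one hr0 _) _

theorem nu_le_exp_of_nonneg (hr0 : 0 ≤ r) (hr1 : r ≤ 1) {z : ℝ} (hz : 0 ≤ z) :
    nu z r ≤ exp ((1 - z) / 3) := by
  have hlog : (1 : ℝ) / 3 ≤ log 2 := by linarith [log_two_gt_d9]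
  calc nu z r ≤ (2 : ℝ) ^ (-z) := (nu_le_hitProb hr0 hr1 z).trans (hitProb_le_rpow z)
    _ = exp (log 2 * -z) := rpow_def_of_pos two_pos _
    _ ≤ exp ((1 - z) / 3) := exp_le_exp.mpr (by nlinarith)

theorem nu_le_exp_of_nonpos (hr0 : 1 / 2 ≤ r) (hr1 : r ≤ 1) {z : ℝ} (hz : z ≤ 0) :
    nu z r ≤ exp ((1 + z) / 3) := by
  set n := ⌊-z⌋₊
  have hn : -z < n + 1 := Nat.lt_floor_add_one _
  have hfactor : ∀ j ∈ range n, 1 - hitProb (z + (j + 1)) * r ≤ 7 / 10 := by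
    intro j hj
    have hjn : (j : ℝ) + 1 ≤ n := by exact_mod_cast mem_range.mp hj
    have hhit := three_fifths_le_hitProb (z := z + (j + 1))
      (by linarith [Nat.floor_le (neg_nonneg.mpr hz)])
    nlinarith
  calc nu z r ≤ ∏ j ∈ range n, (1 - hitProb (z + (j + 1)) * r) :=
        nu_le_prod_range (by linarith) hr1 z n
    _ ≤ ∏ _j ∈ range n, (7 / 10 : ℝ) :=
        prod_le_prod (fun j _ ↦ one_sub_hitProb_mul_nonneg (by linarith) hr1 _) hfactor
    _ = (7 / 10) ^ n := by rw [prod_const, card_range]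
    _ ≤ exp (-(1 / 3)) ^ n := pow_le_pow_left₀ (by norm_num) seven_tenths_le_exp_neg_one_third n
    _ = exp (-(n / 3)) := by rw [← exp_nat_mul]; ring_nf
    _ ≤ exp ((1 + z) / 3) := exp_le_exp.mpr (by linarith)

theorem nu_le_exp_abs (hr0 : 1 / 2 ≤ r) (hr1 : r ≤ 1) (z : ℝ) :
    nu z r ≤ exp ((1 - |z|) / 3) := by
  rcases le_total 0 z with hz | hz
  · rw [abs_of_nonneg hz]; exact nu_le_exp_of_nonneg (by linarith) hr1 hz
  · rw [abs_of_nonpos hz, sub_neg_eq_add]; exact nu_le_exp_of_nonpos hr0 hr1 hz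

theorem integral_sq_mul_nu_le (hr0 : 1 / 2 ≤ r) (hr1 : r ≤ 1) :
    ∫ z : ℝ, z ^ 2 * nu z r ≤ 1080 / 7 := by
  have hdom : ∀ z : ℝ, z ^ 2 * nu z r ≤ exp (1 / 3) * (z ^ 2 * exp (-(1 / 3 * |z|))) := by
    intro z
    rw [mul_left_comm, ← exp_add, show 1 / 3 + -(1 / 3 * |z|) = (1 - |z|) / 3 by ring]
    exact mul_le_mul_of_nonneg_left (nu_le_exp_abs hr0 hr1 z) (sq_nonneg z)
  have hmoment := integral_sq_mul_exp_neg_mul_abs (b := 1 / 3) (by norm_num)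
  -- a non-integrable function would have integral `0`
  have hint : Integrable fun z : ℝ ↦ z ^ 2 * exp (-(1 / 3 * |z|)) :=
    Integrable.of_integral_ne_zero (by rw [hmoment]; norm_num)
  calc ∫ z : ℝ, z ^ 2 * nu z r
      ≤ ∫ z : ℝ, exp (1 / 3) * (z ^ 2 * exp (-(1 / 3 * |z|))) :=
        integral_mono_of_nonneg (.of_forall fun z ↦ mul_nonneg (sq_nonneg z)
          (nu_nonneg (by linarith) hr1 z)) (hint.const_mul _) (.of_forall hdom)
    _ = exp (1 / 3) * 108 := by rw [integral_const_mul, hmoment]; norm_num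
    _ ≤ 1080 / 7 := by linarith [exp_one_third_le]

end Density

/-- Uniform variance bound from Theorem A.3 of the paper: for `1/2 ≤ r ≤ 1`,
with `μ₁(r)` and `σ²(r)` the mean and variance of the density `ν(·, r)`,
`(log 2)² σ²(r) < 79`; in particular `σ²(r) ≤ ∫ z² ν(z,r) dz < 164`. -/
theorem stmt_19 (r : ℝ) (hr0 : 1/2 ≤ r) (hr1 : r ≤ 1) :
    (Real.log 2) ^ 2 *
        ((∫ z : ℝ, z ^ 2 * nu z r) - (∫ z : ℝ, z * nu z r) ^ 2) < 79 ∧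
      ((∫ z : ℝ, z ^ 2 * nu z r) - (∫ z : ℝ, z * nu z r) ^ 2
        ≤ ∫ z : ℝ, z ^ 2 * nu z r) ∧
      (∫ z : ℝ, z ^ 2 * nu z r) < 164 := by
  set I := ∫ z : ℝ, z ^ 2 * nu z r
  set M := ∫ z : ℝ, z * nu z r
  have hI : I ≤ 1080 / 7 := integral_sq_mul_nu_le hr0 hr1
  have hI0 : 0 ≤ I :=
    integral_nonneg fun z ↦ mul_nonneg (sq_nonneg z) (nu_nonneg (by linarith) hr1 z)
  have hvar : I - M ^ 2 ≤ I := sub_le_self I (sq_nonneg M)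
  have hlog : log 2 ^ 2 < 0.49 := by nlinarith [log_two_lt_d9, log_two_gt_d9]
  refine ⟨?_, hvar, by linarith⟩
  calc log 2 ^ 2 * (I - M ^ 2) ≤ log 2 ^ 2 * I := mul_le_mul_of_nonneg_left hvar (sq_nonneg _)
    _ ≤ 0.49 * (1080 / 7) := mul_le_mul hlog.le hI hI0 (by norm_num)
    _ < 79 := by norm_num
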